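/- arXiv:1512.04734 — 3 statements merged into one kernel-verified Lean document; each statement's English description precedes it below -/
import Mathlib

section
/- For any n×p real matrix A and any q ∈ [1, ∞], the matrix A·Aᵀ satisfies ‖A Aᵀ‖_{q,q} ≤ ‖A‖_{2,q}², where ‖M‖_{q₁,q₂} = (∑ᵢ ‖Mᵢ,•‖_{q₁}^{q₂})^{1/q₂} is the mixed norm with rows measured in ℓ_{q₁} and aggregated in ℓ_{q₂}. -/
open scoped ENNReal Matrix

/-- Mixed norm `‖M‖_{q₁,q₂}`: each row is measured in the `ℓ_{q₁}` norm, and the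
resulting vector of row norms is aggregated in the `ℓ_{q₂}` norm
(with the usual sup convention for `q = ∞`). -/
noncomputable def mixedNorm (q₁ q₂ : ℝ≥0∞) [Fact (1 ≤ q₁)] [Fact (1 ≤ q₂)]
    {n p : ℕ} (M : Matrix (Fin n) (Fin p) ℝ) : ℝ :=
  ‖(WithLp.equiv q₂ (Fin n → ℝ)).symm
      (fun i => ‖(WithLp.equiv q₁ (Fin p → ℝ)).symm (M i)‖)‖

/-! By Cauchy–Schwarz, `|(A Aᵀ)ᵢⱼ| ≤ rᵢ rⱼ` where `rᵢ = ‖Aᵢ,•‖₂`. Since `ℓ_q` norms are monotone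
in the absolute values of the entries and homogeneous, row `i` of `A Aᵀ` has `ℓ_q` norm at most
`rᵢ ‖r‖_q`, and aggregating these in `ℓ_q` gives `‖r‖_q² = ‖A‖_{2,q}²`. -/

namespace PiLp

variable {ι : Type*} [Fintype ι] {β γ : ι → Type*}
  [∀ i, SeminormedAddCommGroup (β i)] [∀ i, SeminormedAddCommGroup (γ i)]

lemma norm_toLp_le_norm_toLp (q : ℝ≥0∞) [Fact (1 ≤ q)] {f : ∀ i, β i} {g : ∀ i, γ i}
    (h : ∀ i, ‖f i‖ ≤ ‖g i‖) : ‖WithLp.toLp q f‖ ≤ ‖WithLp.toLp q g‖ := by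
  rcases eq_or_ne q ∞ with rfl | hq
  · rw [norm_toLp, norm_toLp]
    exact pi_norm_le_iff_of_nonneg (norm_nonneg _) |>.mpr fun i =>
      (h i).trans (norm_le_pi_norm g i)
  · have hq₀ : 0 < q.toReal :=
      ENNReal.toReal_pos (zero_lt_one.trans_le Fact.out).ne' hq
    rw [norm_eq_sum hq₀, norm_eq_sum hq₀]
    gcongr with i
    exact h i

end PiLp

lemma Matrix.abs_mul_transpose_apply_le {m n : Type*} [Fintype n] (A : Matrix m n ℝ) (i j : m) :
    |(A * Aᵀ) i j| ≤ ‖WithLp.toLp 2 (A i)‖ * ‖WithLp.toLp 2 (A j)‖ := by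
  have hinner : (A * Aᵀ) i j = inner ℝ (WithLp.toLp 2 (A i)) (WithLp.toLp 2 (A j)) := by
    simp [Matrix.mul_apply, PiLp.inner_apply, mul_comm]
  rw [hinner]
  exact abs_real_inner_le_norm _ _

lemma mixedNorm_le_mul_of_abs_le (q₁ q₂ : ℝ≥0∞) [Fact (1 ≤ q₁)] [Fact (1 ≤ q₂)] {m n : ℕ}
    {M : Matrix (Fin m) (Fin n) ℝ} {r : Fin m → ℝ} {s : Fin n → ℝ} (hr : 0 ≤ r)
    (hM : ∀ i j, |M i j| ≤ r i * s j) :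
    mixedNorm q₁ q₂ M ≤ ‖WithLp.toLp q₂ r‖ * ‖WithLp.toLp q₁ s‖ := by
  have hrow (i : Fin m) : ‖WithLp.toLp q₁ (M i)‖ ≤ ‖WithLp.toLp q₁ s‖ * r i :=
    calc ‖WithLp.toLp q₁ (M i)‖
        ≤ ‖WithLp.toLp q₁ (r i • s)‖ :=
          PiLp.norm_toLp_le_norm_toLp q₁ fun j => (hM i j).trans (le_abs_self _)
      _ = ‖WithLp.toLp q₁ s‖ * r i := by
          rw [WithLp.toLp_smul, norm_smul, Real.norm_of_nonneg (hr i), mul_comm]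
  calc mixedNorm q₁ q₂ M
      ≤ ‖WithLp.toLp q₂ (‖WithLp.toLp q₁ s‖ • r)‖ :=
        PiLp.norm_toLp_le_norm_toLp q₂ fun i => by
          simpa [Real.norm_of_nonneg (hr i)] using hrow i
    _ = ‖WithLp.toLp q₂ r‖ * ‖WithLp.toLp q₁ s‖ := by
        rw [WithLp.toLp_smul, norm_smul, norm_norm, mul_comm]

theorem stmt2 (n p : ℕ) (q : ℝ≥0∞) [Fact (1 ≤ q)] (A : Matrix (Fin n) (Fin p) ℝ) :
    mixedNorm q q (A * Aᵀ) ≤ (mixedNorm 2 q A) ^ 2 := by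
  have hrows : mixedNorm 2 q A = ‖WithLp.toLp q fun i => ‖WithLp.toLp 2 (A i)‖‖ := rfl
  rw [hrows, sq]
  exact mixedNorm_le_mul_of_abs_le q q (fun i => norm_nonneg _) A.abs_mul_transpose_apply_le
end

section
/- Let P be an n×n orthogonal projection matrix and Δ an n×p real matrix. Then ‖PΔ‖_F² ≤ ‖P‖_{∞,∞} · ‖Δ‖_{2,1}², where ‖Δ‖_{2,1} = ∑ᵢ ‖Δᵢ,•‖₂ and ‖P‖_{∞,∞} = maxᵢⱼ|Pᵢⱼ|. -/
/-!
Since `P` is symmetric and idempotent, `‖PΔ‖_F² = tr (Δᵀ P Δ) = ∑ₖₗ Pₖₗ ⟨Δₖ, Δₗ⟩`, a pairing of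
`P` with the Gram matrix `ΔΔᵀ` of the rows of `Δ`. Bounding each `|Pₖₗ|` by the maximal entry and
each `|⟨Δₖ, Δₗ⟩|` by `‖Δₖ‖ ‖Δₗ‖` (Cauchy–Schwarz) leaves `max |Pᵢⱼ| · (∑ₖ ‖Δₖ‖)²`.
-/

open scoped Matrix
open Finset

namespace Matrix

variable {m n : Type*}

lemma sum_sum_sq_eq_trace_transpose_mul {R : Type*} [CommSemiring R] [Fintype m] [Fintype n]
    (A : Matrix m n R) :
    ∑ i, ∑ j, A i j ^ 2 = trace (Aᵀ * A) := by
  simp only [trace, diag, mul_apply, transpose_apply, sq]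
  exact Finset.sum_comm

lemma transpose_mul_mul_self_of_symm_idem {R : Type*} [CommSemiring R] [Fintype m]
    {P : Matrix m m R} (hsym : Pᵀ = P) (hidem : P * P = P) (Δ : Matrix m n R) :
    (P * Δ)ᵀ * (P * Δ) = Δᵀ * P * Δ := by
  rw [transpose_mul, hsym, Matrix.mul_assoc, ← Matrix.mul_assoc P, hidem, Matrix.mul_assoc]

lemma trace_mul_le_mul_sum_abs [Fintype m] [Fintype n] {A : Matrix m n ℝ} {B : Matrix n m ℝ}
    {M : ℝ} (hB : ∀ i j, |B i j| ≤ M) : trace (A * B) ≤ M * ∑ i, ∑ j, |A i j| := by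
  simp only [trace, diag, mul_apply, Finset.mul_sum]
  refine sum_le_sum fun i _ => sum_le_sum fun j _ => ?_
  calc A i j * B j i ≤ |A i j| * |B j i| := (le_abs_self _).trans (abs_mul _ _).le
    _ ≤ |A i j| * M := by gcongr; exact hB j i
    _ = M * |A i j| := mul_comm _ _

lemma abs_mul_transpose_apply_le_s5 [Fintype n] (Δ : Matrix m n ℝ) (k l : m) :
    |(Δ * Δᵀ) k l| ≤ √(∑ j, Δ k j ^ 2) * √(∑ j, Δ l j ^ 2) := by
  simp only [mul_apply, transpose_apply]
  refine abs_le.mpr ⟨?_, Real.sum_mul_le_sqrt_mul_sqrt _ _ _⟩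
  have h := Real.sum_mul_le_sqrt_mul_sqrt univ (fun j => -Δ k j) (fun j => Δ l j)
  simp only [neg_mul, Finset.sum_neg_distrib, neg_sq] at h
  linarith

lemma sum_sum_abs_mul_transpose_le [Fintype m] [Fintype n] (Δ : Matrix m n ℝ) :
    ∑ k, ∑ l, |(Δ * Δᵀ) k l| ≤ (∑ k, √(∑ j, Δ k j ^ 2)) ^ 2 := by
  rw [sq, Finset.sum_mul_sum]
  gcongr with k _ l _
  exact abs_mul_transpose_apply_le_s5 Δ k l

lemma abs_apply_le_iSup_iSup_abs [Finite m] [Finite n] (A : Matrix m n ℝ) (i : m) (j : n) :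
    |A i j| ≤ ⨆ i, ⨆ j, |A i j| :=
  (le_ciSup (Set.finite_range _).bddAbove j).trans
    (le_ciSup (f := fun i => ⨆ j, |A i j|) (Set.finite_range _).bddAbove i)

lemma iSup_iSup_abs_nonneg (A : Matrix m n ℝ) : 0 ≤ ⨆ i, ⨆ j, |A i j| :=
  Real.iSup_nonneg fun _ => Real.iSup_nonneg fun _ => abs_nonneg _

end Matrix

theorem stmt5 (n p : ℕ) (P : Matrix (Fin n) (Fin n) ℝ)
    (hsym : Pᵀ = P) (hidem : P * P = P) (Δ : Matrix (Fin n) (Fin p) ℝ) :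
    ∑ i, ∑ j, ((P * Δ) i j) ^ 2 ≤
      (⨆ i, ⨆ j, |P i j|) * (∑ i, Real.sqrt (∑ j, (Δ i j) ^ 2)) ^ 2 := by
  rw [Matrix.sum_sum_sq_eq_trace_transpose_mul,
    Matrix.transpose_mul_mul_self_of_symm_idem hsym hidem, Matrix.trace_mul_cycle]
  calc Matrix.trace (Δ * Δᵀ * P)
      ≤ (⨆ i, ⨆ j, |P i j|) * ∑ k, ∑ l, |(Δ * Δᵀ) k l| :=
        Matrix.trace_mul_le_mul_sum_abs (Matrix.abs_apply_le_iSup_iSup_abs P)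
    _ ≤ (⨆ i, ⨆ j, |P i j|) * (∑ i, Real.sqrt (∑ j, (Δ i j) ^ 2)) ^ 2 :=
        mul_le_mul_of_nonneg_left (Matrix.sum_sum_abs_mul_transpose_le Δ)
          (Matrix.iSup_iSup_abs_nonneg P)
end

section
/- Let M ∈ ℝ^{n×p}, let x_j ∈ ℝⁿ (j ∈ [p]) be nonzero vectors, and let Δ ∈ ℝ^{n×p}, with ‖Δ‖_{2,1} = ∑_{i=1}^n ‖Δ_{i,•}‖₂. Then ∑_{j=1}^p x_jᵀ Δ_{•,j} ≤ (max_j ‖x_j‖₂) · ‖Δ‖_{2,1} · max_{i∈[n]} (∑_{j=1}^p (x_j)_i² / ‖x_j‖₂²)^{1/2}. -/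
theorem stmt15 (n p : ℕ) (x : Fin p → Fin n → ℝ) (hx : ∀ j, x j ≠ 0)
    (Δ : Matrix (Fin n) (Fin p) ℝ) :
    ∑ j, ∑ i, x j i * Δ i j ≤
      (⨆ j, Real.sqrt (∑ i, (x j i) ^ 2)) *
        ((∑ i, Real.sqrt (∑ j, (Δ i j) ^ 2)) *
          ⨆ i, Real.sqrt (∑ j, (x j i) ^ 2 / (∑ i', (x j i') ^ 2))) := by
  set S := ⨆ j, Real.sqrt (∑ i, (x j i) ^ 2) with hSdef
  set T := ⨆ i, Real.sqrt (∑ j, (x j i) ^ 2 / (∑ i', (x j i') ^ 2)) with hTdef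
  have hSnn : 0 ≤ S := Real.iSup_nonneg fun j => Real.sqrt_nonneg _
  have hTnn : 0 ≤ T := Real.iSup_nonneg fun i => Real.sqrt_nonneg _
  have hpos : ∀ j, 0 < ∑ i', (x j i') ^ 2 := by
    intro j
    obtain ⟨i, hi⟩ := Function.ne_iff.mp (hx j)
    exact Finset.sum_pos' (fun i _ => sq_nonneg _)
      ⟨i, Finset.mem_univ i, by exact pow_pos (abs_pos.mpr hi) 2 |>.trans_eq (by rw [sq_abs])⟩
  have hS : ∀ j, Real.sqrt (∑ i, (x j i) ^ 2) ≤ S :=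
    fun j => le_ciSup (f := fun j => Real.sqrt (∑ i, (x j i) ^ 2)) (Finite.bddAbove_range _) j
  have hT : ∀ i, Real.sqrt (∑ j, (x j i) ^ 2 / (∑ i', (x j i') ^ 2)) ≤ T :=
    fun i => le_ciSup (f := fun i => Real.sqrt (∑ j, (x j i) ^ 2 / (∑ i', (x j i') ^ 2))) (Finite.bddAbove_range _) i
  have key : ∀ i : Fin n, ∑ j, x j i * Δ i j ≤
      S * (Real.sqrt (∑ j, (Δ i j) ^ 2) * T) := by
    intro i
    have step1 : ∑ j, x j i * Δ i j ≤
        ∑ j, S * ((|x j i| / Real.sqrt (∑ i', (x j i') ^ 2)) * |Δ i j|) := by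
      refine Finset.sum_le_sum fun j _ => ?_
      have h1 : x j i * Δ i j ≤ |x j i| * |Δ i j| := by
        calc x j i * Δ i j ≤ |x j i * Δ i j| := le_abs_self _
        _ = |x j i| * |Δ i j| := abs_mul _ _
      have hsq : Real.sqrt (∑ i', (x j i') ^ 2) > 0 :=
        Real.sqrt_pos.mpr (hpos j)
      have h2 : |x j i| = Real.sqrt (∑ i', (x j i') ^ 2) *
          (|x j i| / Real.sqrt (∑ i', (x j i') ^ 2)) := by
        field_simp
      calc x j i * Δ i j ≤ |x j i| * |Δ i j| := h1
      _ = Real.sqrt (∑ i', (x j i') ^ 2) *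
          ((|x j i| / Real.sqrt (∑ i', (x j i') ^ 2)) * |Δ i j|) := by
          field_simp
      _ ≤ S * ((|x j i| / Real.sqrt (∑ i', (x j i') ^ 2)) * |Δ i j|) := by
          apply mul_le_mul_of_nonneg_right (hS j)
          positivity
    have step2 : ∑ j, (|x j i| / Real.sqrt (∑ i', (x j i') ^ 2)) * |Δ i j| ≤
        Real.sqrt (∑ j, (x j i) ^ 2 / (∑ i', (x j i') ^ 2)) *
          Real.sqrt (∑ j, (Δ i j) ^ 2) := by
      have h := Real.sum_mul_le_sqrt_mul_sqrt Finset.univ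
        (fun j => |x j i| / Real.sqrt (∑ i', (x j i') ^ 2)) (fun j => |Δ i j|)
      have hsum1 : ∑ j, (|x j i| / Real.sqrt (∑ i', (x j i') ^ 2)) ^ 2
          = ∑ j, (x j i) ^ 2 / (∑ i', (x j i') ^ 2) :=
        Finset.sum_congr rfl fun j _ => by
          rw [div_pow, sq_abs, Real.sq_sqrt (hpos j).le]
      have hsum2 : ∑ j, |Δ i j| ^ 2 = ∑ j, (Δ i j) ^ 2 := by simp [sq_abs]
      calc ∑ j, (|x j i| / Real.sqrt (∑ i', (x j i') ^ 2)) * |Δ i j|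
          ≤ Real.sqrt (∑ j, (|x j i| / Real.sqrt (∑ i', (x j i') ^ 2)) ^ 2) *
            Real.sqrt (∑ j, |Δ i j| ^ 2) := h
        _ = _ := by rw [hsum1, hsum2]
    calc ∑ j, x j i * Δ i j
        ≤ ∑ j, S * ((|x j i| / Real.sqrt (∑ i', (x j i') ^ 2)) * |Δ i j|) := step1
      _ = S * ∑ j, (|x j i| / Real.sqrt (∑ i', (x j i') ^ 2)) * |Δ i j| := by
          rw [Finset.mul_sum]
      _ ≤ S * (Real.sqrt (∑ j, (x j i) ^ 2 / (∑ i', (x j i') ^ 2)) *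
            Real.sqrt (∑ j, (Δ i j) ^ 2)) := by
          exact mul_le_mul_of_nonneg_left step2 hSnn
      _ ≤ S * (Real.sqrt (∑ j, (Δ i j) ^ 2) * T) := by
          apply mul_le_mul_of_nonneg_left _ hSnn
          rw [mul_comm]
          exact mul_le_mul_of_nonneg_left (hT i) (Real.sqrt_nonneg _)
  calc ∑ j, ∑ i, x j i * Δ i j = ∑ i, ∑ j, x j i * Δ i j := Finset.sum_comm
    _ ≤ ∑ i, S * (Real.sqrt (∑ j, (Δ i j) ^ 2) * T) :=
        Finset.sum_le_sum fun i _ => key i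
    _ = S * ((∑ i, Real.sqrt (∑ j, (Δ i j) ^ 2)) * T) := by
        rw [← Finset.mul_sum, ← Finset.sum_mul]
end
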